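/- If g and h are continuous on [0,1] and ∫₀¹ g(x) dx = ∫₀¹ h(x) dx, then max_{x∈[0,1]} |S(g)(x) − S(h)(x)| ≤ (1/2)·max_{x∈[0,1]} |g(x) − h(x)|; that is, S is a contraction with constant 1/2 on the set of continuous functions on [0,1] with a fixed integral, under the maximum norm. -/

import Mathlib

/-!
With `F y = ∫₀ʸ f`, a change of variables gives `S f x = F (2x)` on `[0, 1/2]` and
`S f x = 2 F 1 - F (2 - 2x)` on `[1/2, 1]`. Since `S` is linear, for `f = g - h` we have `F 1 = 0`,
so `|S g x - S h x| = |F y|` for some `y ∈ [0, 1]`. Finally `F y = -∫_y^1 f`, so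
`|F y| ≤ M · min y (1 - y) ≤ M / 2` where `M = max |f|`.
-/

open MeasureTheory

/-- The piecewise transformation `T(f)` from the paper: `T(f)(x) = 2 f(2x)` on `[0,1/2]`
and `T(f)(x) = 2 f(2-2x)` on `(1/2,1]`. -/
noncomputable def T (f : ℝ → ℝ) (x : ℝ) : ℝ :=
  if x ≤ 1 / 2 then 2 * f (2 * x) else 2 * f (2 - 2 * x)

/-- The integral operator `S(f)(x) = ∫₀ˣ T(f)(t) dt`. -/
noncomputable def S (f : ℝ → ℝ) (x : ℝ) : ℝ := ∫ t in (0:ℝ)..x, T f t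

open Set

lemma T_sub (g h : ℝ → ℝ) : T (g - h) = T g - T h := by
  ext x
  simp only [T, Pi.sub_apply]
  split_ifs <;> ring

lemma T_eqOn_Iic (φ : ℝ → ℝ) : EqOn (T φ) (fun t => 2 * φ (2 * t)) (Iic (1 / 2)) :=
  fun _ ht => if_pos ht

lemma T_eqOn_Ici (φ : ℝ → ℝ) : EqOn (T φ) (fun t => 2 * φ (2 - 2 * t)) (Ici (1 / 2)) := by
  intro t ht
  rcases eq_or_lt_of_le (mem_Ici.1 ht) with rfl | hlt
  · norm_num [T]
  · exact if_neg (not_le.2 hlt)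

lemma intervalIntegrable_T {φ : ℝ → ℝ} (hφ : IntervalIntegrable φ volume 0 1) :
    IntervalIntegrable (T φ) volume 0 1 := by
  have hleft : IntervalIntegrable (fun t => 2 * φ (2 * t)) volume 0 (1 / 2) := by
    simpa using (hφ.comp_mul_left (c := 2)).const_mul 2
  have hright : IntervalIntegrable (fun t => 2 * φ (2 - 2 * t)) volume (1 / 2) 1 := by
    convert (((hφ.comp_sub_left 2).comp_mul_left (c := 2)).const_mul 2).symm using 1 <;> norm_num
  refine (hleft.congr ?_).trans (hright.congr ?_)
  · exact (T_eqOn_Iic φ).symm.mono fun t ht => ht.2.trans_eq (max_eq_right (by norm_num))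
  · exact (T_eqOn_Ici φ).symm.mono fun t ht =>
      (min_eq_left (by norm_num : (1 / 2 : ℝ) ≤ 1)) ▸ ht.1.le

lemma S_eq_integral_of_le_half (φ : ℝ → ℝ) {x : ℝ} (hx₀ : 0 ≤ x) (hx : x ≤ 1 / 2) :
    S φ x = ∫ u in (0:ℝ)..2 * x, φ u := by
  rw [S, intervalIntegral.integral_congr ((T_eqOn_Iic φ).mono fun t ht => ?_),
    intervalIntegral.integral_const_mul, intervalIntegral.integral_comp_mul_left φ two_ne_zero]
  · simp
  · rw [uIcc_of_le hx₀] at ht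
    exact ht.2.trans hx

lemma S_eq_of_half_le {φ : ℝ → ℝ} (hφ : IntervalIntegrable φ volume 0 1) {x : ℝ}
    (hx : 1 / 2 ≤ x) (hx₁ : x ≤ 1) :
    S φ x = 2 * (∫ u in (0:ℝ)..1, φ u) - ∫ u in (0:ℝ)..2 - 2 * x, φ u := by
  have hT := intervalIntegrable_T hφ
  have hmem : 2 - 2 * x ∈ uIcc (0:ℝ) 1 := by
    rw [uIcc_of_le zero_le_one]; constructor <;> linarith
  have hmid : (1 / 2 : ℝ) ∈ uIcc (0:ℝ) 1 := by rw [uIcc_of_le zero_le_one]; norm_num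
  have hx' : x ∈ uIcc (0:ℝ) 1 := by rw [uIcc_of_le zero_le_one]; constructor <;> linarith
  have htail : ∫ t in (1 / 2 : ℝ)..x, T φ t = ∫ u in 2 - 2 * x..1, φ u := by
    rw [intervalIntegral.integral_congr ((T_eqOn_Ici φ).mono fun t ht => ?_),
      intervalIntegral.integral_const_mul, intervalIntegral.integral_comp_sub_mul φ two_ne_zero]
    · norm_num [← mul_assoc]
    · rw [uIcc_of_le hx] at ht
      exact ht.1
  rw [S, ← intervalIntegral.integral_add_adjacent_intervals
      (hT.mono_set (uIcc_subset_uIcc_left hmid)) (hT.mono_set (uIcc_subset_uIcc hmid hx')),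
    ← S, S_eq_integral_of_le_half φ (by norm_num) le_rfl, htail,
    ← intervalIntegral.integral_interval_sub_left hφ (hφ.mono_set (uIcc_subset_uIcc_left hmem))]
  norm_num
  ring

lemma S_sub {g h : ℝ → ℝ} (hg : IntervalIntegrable g volume 0 1)
    (hh : IntervalIntegrable h volume 0 1) {x : ℝ} (hx : x ∈ Icc (0:ℝ) 1) :
    S (g - h) x = S g x - S h x := by
  have hsub : uIcc 0 x ⊆ uIcc (0:ℝ) 1 := uIcc_subset_uIcc_left (by rwa [uIcc_of_le zero_le_one])
  rw [S, S, S, T_sub]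
  exact intervalIntegral.integral_sub ((intervalIntegrable_T hg).mono_set hsub)
    ((intervalIntegrable_T hh).mono_set hsub)

lemma abs_integral_le_of_integral_eq_zero {f : ℝ → ℝ} {a b M : ℝ}
    (hf : IntervalIntegrable f volume a b) (h₀ : ∫ t in a..b, f t = 0)
    (hM : ∀ t ∈ Icc a b, |f t| ≤ M) {y : ℝ} (hy : y ∈ Icc a b) :
    |∫ t in a..y, f t| ≤ M * (b - a) / 2 := by
  have hbound : ∀ c d, a ≤ c → c ≤ d → d ≤ b → |∫ t in c..d, f t| ≤ M * (d - c) := by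
    intro c d hac hcd hdb
    simpa [Real.norm_eq_abs, abs_of_nonneg (sub_nonneg.2 hcd)] using
      intervalIntegral.norm_integral_le_of_norm_le_const (C := M) (f := f) (a := c) (b := d)
        fun t ht => hM t ⟨hac.trans (uIoc_of_le hcd ▸ ht).1.le, (uIoc_of_le hcd ▸ ht).2.trans hdb⟩
  have hay : IntervalIntegrable f volume a y :=
    hf.mono_set (uIcc_subset_uIcc_left (by rwa [uIcc_of_le (hy.1.trans hy.2)]))
  have hcancel : ∫ t in a..y, f t = -∫ t in y..b, f t := by
    rw [← intervalIntegral.integral_interval_sub_left hf hay, h₀]; ring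
  have hleft := hbound a y le_rfl hy.1 hy.2
  have hright := hbound y b hy.1 hy.2 le_rfl
  rw [hcancel, abs_neg] at hleft ⊢
  linarith

lemma abs_S_le_of_integral_eq_zero {f : ℝ → ℝ} {M : ℝ} (hf : IntervalIntegrable f volume 0 1)
    (h₀ : ∫ t in (0:ℝ)..1, f t = 0) (hM : ∀ t ∈ Icc (0:ℝ) 1, |f t| ≤ M) {x : ℝ}
    (hx : x ∈ Icc (0:ℝ) 1) : |S f x| ≤ M / 2 := by
  rcases le_total x (1 / 2) with hx' | hx'
  · rw [S_eq_integral_of_le_half f hx.1 hx']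
    simpa using abs_integral_le_of_integral_eq_zero hf h₀ hM
      (y := 2 * x) ⟨by linarith [hx.1], by linarith⟩
  · rw [S_eq_of_half_le hf hx' hx.2, h₀, mul_zero, zero_sub, abs_neg]
    simpa using abs_integral_le_of_integral_eq_zero hf h₀ hM
      (y := 2 - 2 * x) ⟨by linarith [hx.2], by linarith⟩

/-- `S` is a contraction with constant `1/2` in the max norm on continuous functions
on `[0,1]` with a fixed integral. -/
theorem S_contraction (g h : ℝ → ℝ)
    (hg : ContinuousOn g (Set.Icc 0 1)) (hh : ContinuousOn h (Set.Icc 0 1))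
    (hint : (∫ x in (0:ℝ)..1, g x) = ∫ x in (0:ℝ)..1, h x) :
    sSup ((fun x => |S g x - S h x|) '' Set.Icc 0 1) ≤
      1 / 2 * sSup ((fun x => |g x - h x|) '' Set.Icc 0 1) := by
  set M := sSup ((fun x => |g x - h x|) '' Icc 0 1)
  have hbdd : BddAbove ((fun x => |g x - h x|) '' Icc 0 1) :=
    (isCompact_Icc.image_of_continuousOn (hg.sub hh).abs).bddAbove
  have hM : ∀ t ∈ Icc (0:ℝ) 1, |(g - h) t| ≤ M := fun t ht => le_csSup hbdd ⟨t, ht, rfl⟩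
  have hgi : IntervalIntegrable g volume 0 1 := hg.intervalIntegrable_of_Icc zero_le_one
  have hhi : IntervalIntegrable h volume 0 1 := hh.intervalIntegrable_of_Icc zero_le_one
  have h₀ : ∫ t in (0:ℝ)..1, (g - h) t = 0 :=
    (intervalIntegral.integral_sub hgi hhi).trans (sub_eq_zero.2 hint)
  refine csSup_le ((nonempty_Icc.2 zero_le_one).image _) ?_
  rintro _ ⟨x, hx, rfl⟩
  dsimp only
  rw [← S_sub hgi hhi hx]
  exact (abs_S_le_of_integral_eq_zero (f := g - h) (hgi.sub hhi) h₀ hM hx).trans_eq (by ring)
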